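/- arXiv:1403.5791 — 7 statements merged into one kernel-verified Lean document; each statement's English description precedes it below -/
import Mathlib

section
/- In the 4-player game of the previous context (u_1 rewards a_1=a_2; u_2 rewards (a_1=a_2) XOR (a_3=a_4=1); u_3 = u_4 reward a_3=a_4), for every profile a with a_3 = a_4, players 3 and 4 are both best-replying at a, and the unique best replies of players 3 and 4 at a are a_3 and a_4 respectively. Consequently, any dynamics in which best-replying players never change their action can never leave the set {a : a_3 = a_4 = 1} when started at a profile with a_3 = a_4 = 1, and in particular can never reach the unique PNE (2,2,2,2) from (1,1,1,1). -/
/-!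
Players 3 and 4 both receive the coordination payoff `[a₃ = a₄]`. At a profile with `a₃ = a₄`
each of them already gets the maximal payoff `1`, and only its current action achieves it, so
any dynamics that never moves a best-replying player freezes coordinates 3 and 4 once they
agree. Starting from `a₃ = a₄ = 1` the profile therefore never leaves `{a₃ = a₄ = 1}`, whatever
players 1 and 2 do, and `(2,2,2,2)` is out of reach.
-/

theorem ite_one_zero_le_ite_one_zero_iff {R : Type*} [Zero R] [One R] [PartialOrder R]
    [ZeroLEOneClass R] [NeZero (1 : R)] {p q : Prop} [Decidable p] [Decidable q] :
    (if p then (1 : R) else 0) ≤ (if q then 1 else 0) ↔ (p → q) := by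
  have h10 : ¬ (1 : R) ≤ 0 := fun h => one_ne_zero (le_antisymm h zero_le_one)
  split_ifs <;> simp_all

theorem forall_ite_le_ite_iff {α R : Type*} [Zero R] [One R] [PartialOrder R]
    [ZeroLEOneClass R] [NeZero (1 : R)] {p : α → Prop} [DecidablePred p] (hp : ∃ x, p x)
    (z : α) : (∀ x, (if p x then (1 : R) else 0) ≤ if p z then 1 else 0) ↔ p z := by
  obtain ⟨x, hx⟩ := hp
  simp only [ite_one_zero_le_ite_one_zero_iff]
  exact ⟨fun h => h x hx, fun hz _ _ => hz⟩

theorem Relation.ReflTransGen.invariant {α : Type*} {r : α → α → Prop} {S : α → Prop}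
    (hS : ∀ a b, S a → r a b → S b) {a b : α} (hab : Relation.ReflTransGen r a b) (ha : S a) :
    S b := by
  induction hab with
  | refl => exact ha
  | tail _ hcd ih => exact hS _ _ ih hcd

section Coordination

variable {α β R : Type*} [Zero R] [One R] [PartialOrder R] [ZeroLEOneClass R] [NeZero (1 : R)]
  {k ℓ : ℕ} {u : α × β × Fin k × Fin ℓ → R}
  {a : α × β × Fin k × Fin ℓ}

theorem coordination_left_bestReply_iff
    (hu : ∀ a, u a = if (a.2.2.1 : ℕ) = (a.2.2.2 : ℕ) then 1 else 0)
    (ha : (a.2.2.1 : ℕ) = (a.2.2.2 : ℕ)) (z : Fin k) :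
    (∀ z', u (a.1, a.2.1, z', a.2.2.2) ≤ u (a.1, a.2.1, z, a.2.2.2)) ↔ z = a.2.2.1 := by
  simp only [hu]
  rw [forall_ite_le_ite_iff ⟨a.2.2.1, ha⟩, ← ha, Fin.val_inj]

theorem coordination_right_bestReply_iff
    (hu : ∀ a, u a = if (a.2.2.1 : ℕ) = (a.2.2.2 : ℕ) then 1 else 0)
    (ha : (a.2.2.1 : ℕ) = (a.2.2.2 : ℕ)) (w : Fin ℓ) :
    (∀ w', u (a.1, a.2.1, a.2.2.1, w') ≤ u (a.1, a.2.1, a.2.2.1, w)) ↔ w = a.2.2.2 := by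
  simp only [hu]
  rw [forall_ite_le_ite_iff ⟨a.2.2.2, ha⟩, ha, eq_comm, Fin.val_inj]

theorem coordination_left_isBestReply
    (hu : ∀ a, u a = if (a.2.2.1 : ℕ) = (a.2.2.2 : ℕ) then 1 else 0)
    (ha : (a.2.2.1 : ℕ) = (a.2.2.2 : ℕ)) : ∀ z, u (a.1, a.2.1, z, a.2.2.2) ≤ u a :=
  (coordination_left_bestReply_iff hu ha a.2.2.1).2 rfl

theorem coordination_right_isBestReply
    (hu : ∀ a, u a = if (a.2.2.1 : ℕ) = (a.2.2.2 : ℕ) then 1 else 0)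
    (ha : (a.2.2.1 : ℕ) = (a.2.2.2 : ℕ)) : ∀ w, u (a.1, a.2.1, a.2.2.1, w) ≤ u a :=
  (coordination_right_bestReply_iff hu ha a.2.2.2).2 rfl

end Coordination

/-- In the 4-player game of Lemma 14 (encoded with `Fin`, action `m` is index
`m-1`): at any profile with `a₃ = a₄`, players 3 and 4 are best-replying and
their unique best replies are `a₃` and `a₄`; consequently, any dynamics in
which best-replying players never change their action stays inside the set
`{a : a₃ = a₄ = 1}` when started there, and in particular the unique PNE
`(2,2,2,2)` is unreachable from `(1,1,1,1)`. -/
theorem stmt4 (k ℓ : ℕ) (hk : 2 ≤ k) (hl : 2 ≤ ℓ)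
    (u1 u2 u3 u4 : Fin 2 × Fin 2 × Fin k × Fin ℓ → ℝ)
    (hu3 : ∀ a, u3 a = if (a.2.2.1 : ℕ) = (a.2.2.2 : ℕ) then 1 else 0)
    (hu4 : ∀ a, u4 a = if (a.2.2.1 : ℕ) = (a.2.2.2 : ℕ) then 1 else 0)
    (step : (Fin 2 × Fin 2 × Fin k × Fin ℓ) → (Fin 2 × Fin 2 × Fin k × Fin ℓ) → Prop)
    (hstep : ∀ a b, step a b →
      ((∀ x : Fin 2, u1 (x, a.2.1, a.2.2.1, a.2.2.2) ≤ u1 a) → b.1 = a.1) ∧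
      ((∀ y : Fin 2, u2 (a.1, y, a.2.2.1, a.2.2.2) ≤ u2 a) → b.2.1 = a.2.1) ∧
      ((∀ z : Fin k, u3 (a.1, a.2.1, z, a.2.2.2) ≤ u3 a) → b.2.2.1 = a.2.2.1) ∧
      ((∀ w : Fin ℓ, u4 (a.1, a.2.1, a.2.2.1, w) ≤ u4 a) → b.2.2.2 = a.2.2.2)) :
    (∀ a : Fin 2 × Fin 2 × Fin k × Fin ℓ, (a.2.2.1 : ℕ) = (a.2.2.2 : ℕ) →
      (∀ z : Fin k, u3 (a.1, a.2.1, z, a.2.2.2) ≤ u3 a) ∧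
      (∀ w : Fin ℓ, u4 (a.1, a.2.1, a.2.2.1, w) ≤ u4 a) ∧
      (∀ z : Fin k,
        (∀ z' : Fin k, u3 (a.1, a.2.1, z', a.2.2.2) ≤ u3 (a.1, a.2.1, z, a.2.2.2)) ↔
          z = a.2.2.1) ∧
      (∀ w : Fin ℓ,
        (∀ w' : Fin ℓ, u4 (a.1, a.2.1, a.2.2.1, w') ≤ u4 (a.1, a.2.1, a.2.2.1, w)) ↔
          w = a.2.2.2)) ∧
    (∀ a b : Fin 2 × Fin 2 × Fin k × Fin ℓ,
      (a.2.2.1 : ℕ) = 0 → (a.2.2.2 : ℕ) = 0 →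
      Relation.ReflTransGen step a b →
      (b.2.2.1 : ℕ) = 0 ∧ (b.2.2.2 : ℕ) = 0) ∧
    ¬ Relation.ReflTransGen step (0, 0, ⟨0, by omega⟩, ⟨0, by omega⟩)
        (1, 1, ⟨1, hk⟩, ⟨1, hl⟩) := by
  have stays : ∀ a b : Fin 2 × Fin 2 × Fin k × Fin ℓ,
      (a.2.2.1 : ℕ) = 0 → (a.2.2.2 : ℕ) = 0 → Relation.ReflTransGen step a b →
      (b.2.2.1 : ℕ) = 0 ∧ (b.2.2.2 : ℕ) = 0 := by
    intro a b ha₃ ha₄ hab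
    refine hab.invariant (S := fun c => (c.2.2.1 : ℕ) = 0 ∧ (c.2.2.2 : ℕ) = 0) ?_ ⟨ha₃, ha₄⟩
    rintro c d ⟨hc₃, hc₄⟩ hcd
    have hc : (c.2.2.1 : ℕ) = (c.2.2.2 : ℕ) := hc₃.trans hc₄.symm
    obtain ⟨-, -, hd₃, hd₄⟩ := hstep c d hcd
    rw [hd₃ (coordination_left_isBestReply hu3 hc), hd₄ (coordination_right_isBestReply hu4 hc)]
    exact ⟨hc₃, hc₄⟩
  refine ⟨fun a ha => ⟨coordination_left_isBestReply hu3 ha, coordination_right_isBestReply hu4 ha,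
    coordination_left_bestReply_iff hu3 ha, coordination_right_bestReply_iff hu4 ha⟩, stays,
    fun h => ?_⟩
  simpa using (stays _ _ rfl rfl h).1
end

section
/- Let U be a generic two-player game on A = {1,...,k} × {1,...,ℓ} with ℓ ≥ 3 in which neither player has a strictly dominant action, and let the canonical transition relation be: b is a successor of a if for each i ∈ {1,2}, b_i = a_i when a_i = BR_i(a) and b_i is arbitrary otherwise. Then from any profile x at which player 2 is not best-replying, more than k + ℓ distinct profiles are reachable. -/
/-- In a generic two-player game (`ℓ ≥ 3`) where neither player has a strictly
dominant action, from any profile at which player 2 is not best-replying, more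
than `k + ℓ` distinct profiles are reachable under the canonical transition
relation (best-replying players repeat, others arbitrary). -/
theorem stmt13 (k ℓ : ℕ) (hk : 0 < k) (hl : 3 ≤ ℓ)
    (u1 u2 : Fin k × Fin ℓ → ℝ)
    (hgen1 : ∀ a : Fin k × Fin ℓ, ∃! x : Fin k, ∀ y : Fin k,
      u1 (y, a.2) ≤ u1 (x, a.2))
    (hgen2 : ∀ a : Fin k × Fin ℓ, ∃! x : Fin ℓ, ∀ y : Fin ℓ,
      u2 (a.1, y) ≤ u2 (a.1, x))
    (hdom1 : ¬ ∃ x : Fin k, ∀ b : Fin ℓ, ∀ y : Fin k, u1 (y, b) ≤ u1 (x, b))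
    (hdom2 : ¬ ∃ x : Fin ℓ, ∀ b : Fin k, ∀ y : Fin ℓ, u2 (b, y) ≤ u2 (b, x)) :
    ∀ a : Fin k × Fin ℓ, ¬ (∀ y : Fin ℓ, u2 (a.1, y) ≤ u2 a) →
      k + ℓ < Set.ncard {c : Fin k × Fin ℓ |
        Relation.ReflTransGen
          (fun p q : Fin k × Fin ℓ =>
            ((∀ y : Fin k, u1 (y, p.2) ≤ u1 p) → q.1 = p.1) ∧
            ((∀ y : Fin ℓ, u2 (p.1, y) ≤ u2 p) → q.2 = p.2))
          a c} := by
  intro a ha2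
  classical
  set R : Fin k × Fin ℓ → Fin k × Fin ℓ → Prop := fun p q =>
      ((∀ y : Fin k, u1 (y, p.2) ≤ u1 p) → q.1 = p.1) ∧
      ((∀ y : Fin ℓ, u2 (p.1, y) ≤ u2 p) → q.2 = p.2) with hR
  have hk2 : 2 ≤ k := by
    by_contra h
    have hk1 : k = 1 := by omega
    subst hk1
    exact hdom1 ⟨0, fun b y => by
      have hy : y = 0 := Subsingleton.elim y 0
      rw [hy]⟩
  have hcard : (Nat.card (Fin k × Fin ℓ)) = k * ℓ := by simp
  -- If some profile with both players not best-replying is reachable, everything is.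
  have hfull : ∀ p : Fin k × Fin ℓ,
      ¬ (∀ y : Fin k, u1 (y, p.2) ≤ u1 p) →
      ¬ (∀ y : Fin ℓ, u2 (p.1, y) ≤ u2 p) →
      Relation.ReflTransGen R a p →
      k + ℓ < Set.ncard {c | Relation.ReflTransGen R a c} := by
    intro p hp1 hp2 hap
    have huniv : (Set.univ : Set (Fin k × Fin ℓ)) ⊆ {c | Relation.ReflTransGen R a c} := by
      intro c _
      exact hap.tail ⟨fun h => absurd h hp1, fun h => absurd h hp2⟩
    have h1 : k * ℓ ≤ Set.ncard {c | Relation.ReflTransGen R a c} := by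
      have := Set.ncard_le_ncard huniv (Set.toFinite _)
      rwa [Set.ncard_univ, hcard] at this
    have h2 : k + ℓ < k * ℓ := by
      obtain ⟨k', rfl⟩ : ∃ k', k = k' + 2 := ⟨k - 2, by omega⟩
      obtain ⟨l', rfl⟩ : ∃ l', ℓ = l' + 3 := ⟨ℓ - 3, by omega⟩
      nlinarith
    omega
  by_cases h1 : ∀ y : Fin k, u1 (y, a.2) ≤ u1 a
  · obtain ⟨b, hb, hbu⟩ := hgen2 a
    have hy0 : ∃ y0 : Fin ℓ, ¬ ∀ z : Fin k, u1 (z, y0) ≤ u1 (a.1, y0) := by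
      by_contra h
      push_neg at h
      exact hdom1 ⟨a.1, h⟩
    obtain ⟨y0, hy0⟩ := hy0
    have hstep_col : ∀ y : Fin ℓ, Relation.ReflTransGen R a (a.1, y) := by
      intro y
      exact Relation.ReflTransGen.single ⟨fun _ => rfl, fun h => absurd h ha2⟩
    by_cases hyb : y0 = b
    · subst hyb
      have hx0 : ∃ x0 : Fin k, ¬ ∀ y : Fin ℓ, u2 (x0, y) ≤ u2 (x0, y0) := by
        by_contra h
        push_neg at h
        exact hdom2 ⟨y0, h⟩
      obtain ⟨x0, hx0⟩ := hx0
      have hx0ne : x0 ≠ a.1 := by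
        intro h
        rw [h] at hx0
        exact hx0 hb
      have hab : Relation.ReflTransGen R a (a.1, y0) := hstep_col y0
      have hrow : ∀ x : Fin k, Relation.ReflTransGen R a (x, y0) := by
        intro x
        exact hab.tail ⟨fun h => absurd h hy0, fun _ => rfl⟩
      have hcol2 : ∀ y : Fin ℓ, Relation.ReflTransGen R a (x0, y) := by
        intro y
        exact (hrow x0).tail ⟨fun _ => rfl, fun h => absurd h hx0⟩
      set A : Finset (Fin k × Fin ℓ) := ({a.1, x0} : Finset (Fin k)) ×ˢ Finset.univ with hA
      set B : Finset (Fin k × Fin ℓ) := Finset.univ ×ˢ ({y0} : Finset (Fin ℓ)) with hB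
      have hTsub : (↑(A ∪ B) : Set (Fin k × Fin ℓ)) ⊆ {c | Relation.ReflTransGen R a c} := by
        rintro ⟨c1, c2⟩ hc
        simp [hA, hB] at hc
        rcases hc with (h | h) | h
        · subst h; exact hstep_col c2
        · subst h; exact hcol2 c2
        · subst h; exact hrow c1
      have hAcard : A.card = 2 * ℓ := by
        rw [hA, Finset.card_product, Finset.card_pair (Ne.symm hx0ne)]
        simp
      have hBcard : B.card = k := by
        rw [hB, Finset.card_product]
        simp
      have hABcard : (A ∩ B).card ≤ 2 := by
        have hsub : A ∩ B ⊆ ({a.1, x0} : Finset (Fin k)) ×ˢ ({y0} : Finset (Fin ℓ)) := by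
          rintro ⟨c1, c2⟩ hc
          rw [Finset.mem_inter, hA, hB] at hc
          obtain ⟨hcA, hcB⟩ := hc
          rw [Finset.mem_product] at hcA hcB ⊢
          exact ⟨hcA.1, hcB.2⟩
        calc (A ∩ B).card ≤ _ := Finset.card_le_card hsub
          _ ≤ 2 := by
            rw [Finset.card_product]
            have := Finset.card_insert_le a.1 ({x0} : Finset (Fin k))
            simp at this ⊢
            omega
      have hUcard : 2 * ℓ + k - 2 ≤ (A ∪ B).card := by
        have := Finset.card_union_add_card_inter A B
        omega
      have hle : (A ∪ B).card ≤ Set.ncard {c | Relation.ReflTransGen R a c} := by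
        have := Set.ncard_le_ncard hTsub (Set.toFinite _)
        rwa [Set.ncard_coe_finset] at this
      omega
    · have hBR2 : ¬ ∀ y : Fin ℓ, u2 (a.1, y) ≤ u2 (a.1, y0) := by
        intro h
        exact hyb (hbu y0 h)
      exact hfull (a.1, y0) hy0 hBR2 (hstep_col y0)
  · exact hfull a h1 ha2 Relation.ReflTransGen.refl
end

section
/- Let U be a generic two-player game on A = {1,...,k} × {1,...,ℓ} in which neither player has a strictly dominant action. Then for every pair of profiles a, b ∈ A such that a is not a pure Nash equilibrium of U, the profile b is reachable from a under the canonical transition relation (best-replying players repeat, non-best-replying players may play anything). -/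
/-!
A player who is not best-replying may switch to any action, so a profile at which neither player
best-replies reaches every profile in one step. Starting from `(a₁, c₀)` with player 1 not
best-replying, player 1 can move anywhere within column `c₀`. To reach `(b₁, b₂)`: if `c₀` is not
player 2's best reply to `b₁`, move to `(b₁, c₀)` and let player 2 move to `b₂`. Otherwise pick a
row `r` to which `c₀` is not player 2's best reply (player 2 has no dominant action). If player 1
is not best-replying at `(r, c₀)` either, jump to `b`; if he is, let player 2 move to a column `c`
where `r` is not a best reply (player 1 has no dominant action), so `c ≠ c₀`; then player 1 moves
to `b₁`, and as `c₀` is the unique best reply to `b₁`, player 2 moves from `c` to `b₂`. If instead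
only player 2 is not best-replying at the start, he first moves to a column where player 1 is not.
-/

open Relation

section CanonicalStep

variable {K L : Type*} {br₁ br₂ : K × L → Prop}

/-- `br₁ p` and `br₂ p` say that player 1, resp. player 2, is best-replying at the profile `p`. -/
def CanonicalStep (br₁ br₂ : K × L → Prop) (p q : K × L) : Prop :=
  (br₁ p → q.1 = p.1) ∧ (br₂ p → q.2 = p.2)

theorem canonicalStep_update_fst {p : K × L} (h : ¬ br₁ p) (x : K) :
    CanonicalStep br₁ br₂ p (x, p.2) :=
  ⟨fun h' => absurd h' h, fun _ => rfl⟩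

theorem canonicalStep_update_snd {p : K × L} (h : ¬ br₂ p) (y : L) :
    CanonicalStep br₁ br₂ p (p.1, y) :=
  ⟨fun _ => rfl, fun h' => absurd h' h⟩

theorem canonicalStep_of_not_of_not {p : K × L} (h₁ : ¬ br₁ p) (h₂ : ¬ br₂ p) (q : K × L) :
    CanonicalStep br₁ br₂ p q :=
  ⟨fun h => absurd h h₁, fun h => absurd h h₂⟩

theorem reflTransGen_canonicalStep_of_not_fst
    (hbr₂ : ∀ x c c', br₂ (x, c) → br₂ (x, c') → c = c')
    (hdom₁ : ∀ x, ∃ c, ¬ br₁ (x, c)) (hdom₂ : ∀ c, ∃ x, ¬ br₂ (x, c))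
    {a : K × L} (ha : ¬ br₁ a) (b : K × L) :
    ReflTransGen (CanonicalStep br₁ br₂) a b := by
  obtain ⟨a₁, c₀⟩ := a
  obtain ⟨b₁, b₂⟩ := b
  by_cases hb : br₂ (b₁, c₀)
  · obtain ⟨r, hr⟩ := hdom₂ c₀
    refine .head (canonicalStep_update_fst ha r) ?_
    by_cases hrc : br₁ (r, c₀)
    · obtain ⟨c, hc⟩ := hdom₁ r
      have hcc₀ : c ≠ c₀ := by
        rintro rfl
        exact hc hrc
      have hbc : ¬ br₂ (b₁, c) := fun h => hcc₀ (hbr₂ _ _ _ h hb)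
      exact .head (canonicalStep_update_snd hr c)
        (.head (canonicalStep_update_fst hc b₁) (.single (canonicalStep_update_snd hbc b₂)))
    · exact .single (canonicalStep_of_not_of_not hrc hr _)
  · exact .head (canonicalStep_update_fst ha b₁) (.single (canonicalStep_update_snd hb b₂))

theorem reflTransGen_canonicalStep_of_not_and
    (hbr₂ : ∀ x c c', br₂ (x, c) → br₂ (x, c') → c = c')
    (hdom₁ : ∀ x, ∃ c, ¬ br₁ (x, c)) (hdom₂ : ∀ c, ∃ x, ¬ br₂ (x, c))
    {a : K × L} (ha : ¬ (br₁ a ∧ br₂ a)) (b : K × L) :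
    ReflTransGen (CanonicalStep br₁ br₂) a b := by
  by_cases h₁ : br₁ a
  · obtain ⟨c, hc⟩ := hdom₁ a.1
    exact .head (canonicalStep_update_snd (fun h₂ => ha ⟨h₁, h₂⟩) c)
      (reflTransGen_canonicalStep_of_not_fst hbr₂ hdom₁ hdom₂ hc b)
  · exact reflTransGen_canonicalStep_of_not_fst hbr₂ hdom₁ hdom₂ h₁ b

end CanonicalStep

theorem stmt14_general (k ℓ : ℕ)
    (u1 u2 : Fin k × Fin ℓ → ℝ)
    (hgen2 : ∀ a : Fin k × Fin ℓ, ∃! x : Fin ℓ, ∀ y : Fin ℓ,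
      u2 (a.1, y) ≤ u2 (a.1, x))
    (hdom1 : ¬ ∃ x : Fin k, ∀ b : Fin ℓ, ∀ y : Fin k, u1 (y, b) ≤ u1 (x, b))
    (hdom2 : ¬ ∃ x : Fin ℓ, ∀ b : Fin k, ∀ y : Fin ℓ, u2 (b, y) ≤ u2 (b, x)) :
    ∀ a b : Fin k × Fin ℓ,
      ¬ ((∀ y : Fin k, u1 (y, a.2) ≤ u1 a) ∧ (∀ y : Fin ℓ, u2 (a.1, y) ≤ u2 a)) →
      Relation.ReflTransGen
        (fun p q : Fin k × Fin ℓ =>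
          ((∀ y : Fin k, u1 (y, p.2) ≤ u1 p) → q.1 = p.1) ∧
          ((∀ y : Fin ℓ, u2 (p.1, y) ≤ u2 p) → q.2 = p.2))
        a b :=
  fun _ b ha => reflTransGen_canonicalStep_of_not_and
    (fun x _ _ hc hc' => (hgen2 (x, _)).unique hc hc')
    (fun x => not_forall.mp (not_exists.mp hdom1 x))
    (fun c => not_forall.mp (not_exists.mp hdom2 c)) ha b

/-- In a generic two-player game where neither player has a strictly dominant
action, from any profile `a` that is not a pure Nash equilibrium, every
profile `b` is reachable under the canonical transition relation
(best-replying players repeat, others arbitrary). -/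
theorem stmt14 (k ℓ : ℕ) (hk : 0 < k) (hl : 0 < ℓ)
    (u1 u2 : Fin k × Fin ℓ → ℝ)
    (hgen1 : ∀ a : Fin k × Fin ℓ, ∃! x : Fin k, ∀ y : Fin k,
      u1 (y, a.2) ≤ u1 (x, a.2))
    (hgen2 : ∀ a : Fin k × Fin ℓ, ∃! x : Fin ℓ, ∀ y : Fin ℓ,
      u2 (a.1, y) ≤ u2 (a.1, x))
    (hdom1 : ¬ ∃ x : Fin k, ∀ b : Fin ℓ, ∀ y : Fin k, u1 (y, b) ≤ u1 (x, b))
    (hdom2 : ¬ ∃ x : Fin ℓ, ∀ b : Fin k, ∀ y : Fin ℓ, u2 (b, y) ≤ u2 (b, x)) :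
    ∀ a b : Fin k × Fin ℓ,
      ¬ ((∀ y : Fin k, u1 (y, a.2) ≤ u1 a) ∧ (∀ y : Fin ℓ, u2 (a.1, y) ≤ u2 a)) →
      Relation.ReflTransGen
        (fun p q : Fin k × Fin ℓ =>
          ((∀ y : Fin k, u1 (y, p.2) ≤ u1 p) → q.1 = p.1) ∧
          ((∀ y : Fin ℓ, u2 (p.1, y) ≤ u2 p) → q.2 = p.2))
        a b :=
  stmt14_general k ℓ u1 u2 hgen2 hdom1 hdom2
end

section
/- Let A = {1,2} × {1,...,k} and let U be any game on A possessing at least one pure Nash equilibrium. Then from every profile a ∈ A, some pure Nash equilibrium of U is reachable under the canonical transition relation (best-replying players repeat their action; non-best-replying players may play any action). -/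
/-- For any 2×k game possessing a pure Nash equilibrium, from every profile
some PNE is reachable under the canonical transition relation (best-replying
players repeat their action, non-best-replying players may play anything). -/
theorem stmt15 (k : ℕ) (hk : 2 ≤ k)
    (u1 u2 : Fin 2 × Fin k → ℝ)
    (hPNE : ∃ p : Fin 2 × Fin k,
      (∀ x : Fin 2, u1 (x, p.2) ≤ u1 p) ∧ (∀ y : Fin k, u2 (p.1, y) ≤ u2 p)) :
    ∀ a : Fin 2 × Fin k, ∃ p : Fin 2 × Fin k,
      ((∀ x : Fin 2, u1 (x, p.2) ≤ u1 p) ∧ (∀ y : Fin k, u2 (p.1, y) ≤ u2 p)) ∧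
      Relation.ReflTransGen
        (fun p q : Fin 2 × Fin k =>
          ((∀ x : Fin 2, u1 (x, p.2) ≤ u1 p) → q.1 = p.1) ∧
          ((∀ y : Fin k, u2 (p.1, y) ≤ u2 p) → q.2 = p.2))
        a p := by
  obtain ⟨p, hp1, hp2⟩ := hPNE
  set R : Fin 2 × Fin k → Fin 2 × Fin k → Prop :=
    fun p q =>
      ((∀ x : Fin 2, u1 (x, p.2) ≤ u1 p) → q.1 = p.1) ∧
      ((∀ y : Fin k, u2 (p.1, y) ≤ u2 p) → q.2 = p.2) with hRdef
  have hk' : Nonempty (Fin k) := ⟨⟨0, by omega⟩⟩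
  -- Key lemma: if player 1 best-replies and player 2 does not, a PNE is reachable.
  have key : ∀ b : Fin 2 × Fin k, (∀ x : Fin 2, u1 (x, b.2) ≤ u1 b) →
      ¬ (∀ y : Fin k, u2 (b.1, y) ≤ u2 b) →
      ∃ q : Fin 2 × Fin k,
        ((∀ x : Fin 2, u1 (x, q.2) ≤ u1 q) ∧ (∀ y : Fin k, u2 (q.1, y) ≤ u2 q)) ∧
        Relation.ReflTransGen R b q := by
    rintro ⟨x, y0⟩ hBR1 hnBR2
    by_cases hpx : p.1 = x
    · -- the known PNE is in this row: one step
      refine ⟨p, ⟨hp1, hp2⟩, Relation.ReflTransGen.single ?_⟩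
      exact ⟨fun _ => hpx, fun h => absurd h hnBR2⟩
    · obtain ⟨ys, hys⟩ := Finite.exists_max (fun y => u2 (x, y))
      have step1 : R (x, y0) (x, ys) := ⟨fun _ => rfl, fun h => absurd h hnBR2⟩
      by_cases hBR1' : ∀ z : Fin 2, u1 (z, ys) ≤ u1 (x, ys)
      · exact ⟨(x, ys), ⟨hBR1', hys⟩, Relation.ReflTransGen.single step1⟩
      · push_neg at hBR1'
        obtain ⟨z, hz⟩ := hBR1'
        have hzx : z ≠ x := by rintro rfl; exact lt_irrefl _ hz
        have two_cases : ∀ w : Fin 2, w = x ∨ w = z := by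
          intro w
          have h1 : x.val < 2 := x.isLt
          have h2 : z.val < 2 := z.isLt
          have h3 : w.val < 2 := w.isLt
          have h4 : x.val ≠ z.val := fun h => hzx (Fin.ext h.symm)
          rcases eq_or_ne w x with h | h
          · exact Or.inl h
          · right
            have h5 : w.val ≠ x.val := fun hh => h (Fin.ext hh)
            exact Fin.ext (by omega)
        have hBRz : ∀ w : Fin 2, u1 (w, ys) ≤ u1 (z, ys) := by
          intro w
          rcases two_cases w with rfl | rfl
          · exact le_of_lt hz
          · exact le_refl _
        have step2 : R (x, ys) (z, ys) :=
          ⟨fun h => absurd (h z) (not_le.mpr hz), fun _ => rfl⟩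
        by_cases hBR2' : ∀ y : Fin k, u2 (z, y) ≤ u2 (z, ys)
        · exact ⟨(z, ys), ⟨hBRz, hBR2'⟩,
            Relation.ReflTransGen.head step1 (Relation.ReflTransGen.single step2)⟩
        · have hpz : p.1 = z := by
            rcases two_cases p.1 with h | h
            · exact absurd h hpx
            · exact h
          have step3 : R (z, ys) (z, p.2) := ⟨fun _ => rfl, fun h => absurd h hBR2'⟩
          have hzp : (z, p.2) = p := by
            rw [← hpz]
          refine ⟨p, ⟨hp1, hp2⟩, ?_⟩
          refine Relation.ReflTransGen.head step1
            (Relation.ReflTransGen.head step2 (Relation.ReflTransGen.single ?_))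
          rwa [← hzp]
  intro a
  by_cases h1 : ∀ x : Fin 2, u1 (x, a.2) ≤ u1 a
  · by_cases h2 : ∀ y : Fin k, u2 (a.1, y) ≤ u2 a
    · exact ⟨a, ⟨h1, h2⟩, Relation.ReflTransGen.refl⟩
    · exact key a h1 h2
  · by_cases h2 : ∀ y : Fin k, u2 (a.1, y) ≤ u2 a
    · -- player 2 best-replies, player 1 doesn't: move player 1 to its best reply
      obtain ⟨x, y⟩ := a
      obtain ⟨xs, hxs⟩ := Finite.exists_max (fun z => u1 (z, y))
      have step0 : R (x, y) (xs, y) := ⟨fun h => absurd h h1, fun _ => rfl⟩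
      by_cases h2' : ∀ y' : Fin k, u2 (xs, y') ≤ u2 (xs, y)
      · exact ⟨(xs, y), ⟨hxs, h2'⟩, Relation.ReflTransGen.single step0⟩
      · obtain ⟨q, hq, hreach⟩ := key (xs, y) hxs h2'
        exact ⟨q, hq, Relation.ReflTransGen.head step0 hreach⟩
    · -- neither best-replies: jump to the PNE directly
      refine ⟨p, ⟨hp1, hp2⟩, Relation.ReflTransGen.single ?_⟩
      exact ⟨fun h => absurd h h1, fun h => absurd h h2⟩
end

section
/- Consider the 2×2×2 game U of Lemma 10 (utilities given by M_1 = [[(1,1,1),(1,0,1)],[(1,0,0),(0,1,1)]] and M_2 = [[(0,1,0),(0,1,1)],[(0,0,0),(1,0,1)]]). Under the canonical transition relation (best-replying players repeat, others arbitrary), every profile reachable from (1,1,2) has third coordinate equal to 2; in particular the unique PNE (1,1,1) is not reachable from (1,1,2). -/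
/-- Payoff matrices of the 2×2×2 game of Lemma 10 (actions `1,2` encoded as
`0,1 : Fin 2`). -/
def stmt2M : Fin 2 → Fin 2 → Fin 2 → ℝ × ℝ × ℝ :=
  ![![![(1,1,1), (1,0,1)], ![(1,0,0), (0,1,1)]],
    ![![(0,1,0), (0,1,1)], ![(0,0,0), (1,0,1)]]]

noncomputable def stmt2u1 (a : Fin 2 × Fin 2 × Fin 2) : ℝ := (stmt2M a.1 a.2.1 a.2.2).1
noncomputable def stmt2u2 (a : Fin 2 × Fin 2 × Fin 2) : ℝ := (stmt2M a.1 a.2.1 a.2.2).2.1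
noncomputable def stmt2u3 (a : Fin 2 × Fin 2 × Fin 2) : ℝ := (stmt2M a.1 a.2.1 a.2.2).2.2

/-- The canonical transition relation for the game of Lemma 10: best-replying
players repeat their action, other players may play anything. -/
def stmt16step (a b : Fin 2 × Fin 2 × Fin 2) : Prop :=
  ((∀ x : Fin 2, stmt2u1 (x, a.2.1, a.2.2) ≤ stmt2u1 a) → b.1 = a.1) ∧
  ((∀ y : Fin 2, stmt2u2 (a.1, y, a.2.2) ≤ stmt2u2 a) → b.2.1 = a.2.1) ∧
  ((∀ z : Fin 2, stmt2u3 (a.1, a.2.1, z) ≤ stmt2u3 a) → b.2.2 = a.2.2)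

lemma stmt16_aux (a : Fin 2 × Fin 2 × Fin 2) (h : a.2.2 = 1) :
    ∀ z : Fin 2, stmt2u3 (a.1, a.2.1, z) ≤ stmt2u3 a := by
  obtain ⟨x, y, w⟩ := a
  simp only at h
  subst h
  intro z
  fin_cases x <;> fin_cases y <;> fin_cases z <;>
    simp [stmt2u3, stmt2M] <;> norm_num

/-- Under the canonical transition relation in the game of Lemma 10, every
profile reachable from `(1,1,2)` (encoded `(0,0,1)`) has third coordinate `2`;
in particular the unique PNE `(1,1,1)` (encoded `(0,0,0)`) is unreachable from
`(1,1,2)`. -/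
theorem stmt16 :
    (∀ b : Fin 2 × Fin 2 × Fin 2,
      Relation.ReflTransGen stmt16step (0, 0, 1) b → b.2.2 = 1) ∧
    ¬ Relation.ReflTransGen stmt16step (0, 0, 1) (0, 0, 0) := by
  have key : ∀ b : Fin 2 × Fin 2 × Fin 2,
      Relation.ReflTransGen stmt16step (0, 0, 1) b → b.2.2 = 1 := by
    intro b h
    induction h with
    | refl => rfl
    | tail _ hstep ih =>
      rename_i a c _
      exact (hstep.2.2 (stmt16_aux a ih)).trans ih
  exact ⟨key, fun h => by simpa using key _ h⟩
end

section
/- Let A be a finite action profile space and let f be a deterministic 3-recall strategy vector for a game U defined as follows, using a cyclic permutation σ of A: on state (a,b,c) ∈ A³, player i plays c_i if b = c and c_i ∈ BR_i(c); plays min BR_i(c) if b = c and c_i ∉ BR_i(c); plays σ_i(a) if a = b ≠ c; and plays c_i otherwise. If U has at least one pure Nash equilibrium, then for every initial state x ∈ A³, the (deterministic) run of f from x converges to a state (p,p,p) where p is a pure Nash equilibrium of U. -/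
/-- The deterministic 3-recall dynamics of Theorem 16: with `σ` a cyclic
permutation of the profile space, on state `(a,b,c)` each player `i` repeats
`c i` if `b = c` and `c i` is a best reply to `c`; plays its least best reply
to `c` if `b = c` and `c i` is not a best reply; plays `σ i a` if
`a = b ≠ c`; and plays `c i` otherwise.  If the game has a pure Nash
equilibrium, every run converges to a repeated PNE. -/
theorem stmt17 {n : ℕ} (hn : 2 ≤ n) (k : Fin n → ℕ) (hk : ∀ i, 2 ≤ k i)
    (u : Fin n → ((i : Fin n) → Fin (k i)) → ℝ)
    (σ : ((i : Fin n) → Fin (k i)) → ((i : Fin n) → Fin (k i)))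
    (hσ : ∀ a b : (i : Fin n) → Fin (k i), ∃ m : ℕ, σ^[m] a = b)
    (f : ((i : Fin n) → Fin (k i)) → ((i : Fin n) → Fin (k i)) →
      ((i : Fin n) → Fin (k i)) → ((i : Fin n) → Fin (k i)))
    (hf1 : ∀ a b c, b = c → ∀ i,
      (∀ y : Fin (k i), u i (Function.update c i y) ≤ u i c) →
      f a b c i = c i)
    (hf2 : ∀ a b c, b = c → ∀ i,
      ¬ (∀ y : Fin (k i), u i (Function.update c i y) ≤ u i c) →
      ((∀ y : Fin (k i),
          u i (Function.update c i y) ≤ u i (Function.update c i (f a b c i))) ∧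
       ∀ x : Fin (k i),
         (∀ y : Fin (k i), u i (Function.update c i y) ≤ u i (Function.update c i x)) →
         f a b c i ≤ x))
    (hf3 : ∀ a b c, a = b → b ≠ c → f a b c = σ a)
    (hf4 : ∀ a b c, b ≠ c → a ≠ b → f a b c = c)
    (hPNE : ∃ p : (i : Fin n) → Fin (k i),
      ∀ i, ∀ y : Fin (k i), u i (Function.update p i y) ≤ u i p)
    (s : ℕ → ((i : Fin n) → Fin (k i)))
    (hrec : ∀ t, s (t + 3) = f (s t) (s (t + 1)) (s (t + 2))) :
    ∃ p : (i : Fin n) → Fin (k i),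
      (∀ i, ∀ y : Fin (k i), u i (Function.update p i y) ≤ u i p) ∧
      ∃ T : ℕ, ∀ t, T ≤ t → s t = p := by
  classical
  obtain ⟨p, hp⟩ := hPNE
  -- Once two consecutive plays equal a PNE `q`, the run stays at `q` forever.
  have absorb : ∀ q : (i : Fin n) → Fin (k i),
      (∀ i, ∀ y : Fin (k i), u i (Function.update q i y) ≤ u i q) →
      ∀ t : ℕ, s (t + 1) = q → s (t + 2) = q →
      ∀ v : ℕ, t + 1 ≤ v → s v = q := by
    intro q hq t h1 h2
    have hstep : ∀ x : (i : Fin n) → Fin (k i), f x q q = q := by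
      intro x
      funext i
      exact hf1 x q q rfl i (hq i)
    have hall : ∀ m : ℕ, s (t + 1 + m) = q := by
      intro m
      induction m using Nat.strong_induction_on with
      | _ m ih =>
        match m with
        | 0 => exact h1
        | 1 => exact h2
        | (m + 2) =>
          have e1 : s (t + 1 + m) = q := ih m (by omega)
          have e2 : s (t + 1 + (m + 1)) = q := ih (m + 1) (by omega)
          have e3 : s (t + m + 3) = f (s (t + m)) (s (t + m + 1)) (s (t + m + 2)) :=
            hrec (t + m)
          have e4 : t + 1 + (m + 2) = t + m + 3 := by omega
          have e5 : t + 1 + m = t + m + 1 := by omega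
          have e6 : t + 1 + (m + 1) = t + m + 2 := by omega
          rw [e4, e3, ← e5, ← e6, e1, e2, hstep]
    intro v hv
    obtain ⟨m, rfl⟩ := Nat.exists_eq_add_of_le hv
    exact hall m
  -- Main induction: if the probe value `c` reaches `p` after `m` steps of `σ`,
  -- and two consecutive plays equal `c`, the run converges to some PNE.
  have key : ∀ m : ℕ, ∀ c : (i : Fin n) → Fin (k i), ∀ t : ℕ,
      σ^[m] c = p → s (t + 1) = c → s (t + 2) = c →
      ∃ q : (i : Fin n) → Fin (k i),
        (∀ i, ∀ y : Fin (k i), u i (Function.update q i y) ≤ u i q) ∧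
        ∃ T : ℕ, ∀ v, T ≤ v → s v = q := by
    intro m
    induction m with
    | zero =>
      intro c t hm h1 h2
      subst hm
      exact ⟨c, hp, t + 1, absorb c hp t h1 h2⟩
    | succ m ih =>
      intro c t hm h1 h2
      by_cases hc : ∀ i, ∀ y : Fin (k i), u i (Function.update c i y) ≤ u i c
      · exact ⟨c, hc, t + 1, absorb c hc t h1 h2⟩
      · -- c is not a PNE
        have hd3 : s (t + 3) = f (s t) c c := by
          rw [hrec t, h1, h2]
        have hdc : s (t + 3) ≠ c := by
          push_neg at hc
          obtain ⟨i, hi⟩ := hc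
          have hi' : ¬ ∀ y : Fin (k i), u i (Function.update c i y) ≤ u i c := by
            push_neg
            exact hi
          intro hdceq
          have h2' := (hf2 (s t) c c rfl i hi').1
          have hfi : f (s t) c c i = c i := by
            rw [← hd3, hdceq]
          rw [hfi, Function.update_eq_self] at h2'
          exact hi' h2'
        have h4 : s (t + 4) = σ c := by
          have e : s (t + 1 + 3) = f (s (t + 1)) (s (t + 1 + 1)) (s (t + 1 + 2)) :=
            hrec (t + 1)
          have e1 : t + 1 + 3 = t + 4 := by omega
          have e2 : t + 1 + 1 = t + 2 := by omega
          have e3 : t + 1 + 2 = t + 3 := by omega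
          rw [e1, e2, e3, h1, h2] at e
          rw [e, hf3 c c (s (t + 3)) rfl (fun h => hdc h.symm)]
        have hm' : σ^[m] (σ c) = p := by
          rw [← Function.iterate_succ_apply]
          exact hm
        by_cases hds : s (t + 3) = σ c
        · -- probe at σ c at time t + 2
          have h3' : s (t + 2 + 1) = σ c := by
            have : t + 2 + 1 = t + 3 := by omega
            rw [this]; exact hds
          have h4' : s (t + 2 + 2) = σ c := by
            have : t + 2 + 2 = t + 4 := by omega
            rw [this]; exact h4
          exact ih (σ c) (t + 2) hm' h3' h4'
        · -- probe at σ c at time t + 3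
          have h5 : s (t + 5) = σ c := by
            have e : s (t + 2 + 3) = f (s (t + 2)) (s (t + 2 + 1)) (s (t + 2 + 2)) :=
              hrec (t + 2)
            have e1 : t + 2 + 3 = t + 5 := by omega
            have e2 : t + 2 + 1 = t + 3 := by omega
            have e3 : t + 2 + 2 = t + 4 := by omega
            rw [e1, e2, e3, h2, h4] at e
            rw [e, hf4 c (s (t + 3)) (σ c) hds (fun h => hdc h.symm)]
          have h4' : s (t + 3 + 1) = σ c := by
            have : t + 3 + 1 = t + 4 := by omega
            rw [this]; exact h4
          have h5' : s (t + 3 + 2) = σ c := by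
            have : t + 3 + 2 = t + 5 := by omega
            rw [this]; exact h5
          exact ih (σ c) (t + 3) hm' h4' h5'
  -- Reach a probe state from the initial condition.
  have h3eq : s 3 = f (s 0) (s 1) (s 2) := by
    have := hrec 0
    norm_num at this
    exact this
  by_cases h12 : s 1 = s 2
  · obtain ⟨m, hm⟩ := hσ (s 2) p
    exact key m (s 2) 0 hm h12 rfl
  · by_cases h01 : s 0 = s 1
    · have h3 : s 3 = σ (s 0) := by
        rw [h3eq, hf3 (s 0) (s 1) (s 2) h01 (h01 ▸ h12)]
      by_cases h23 : s 2 = s 3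
      · obtain ⟨m, hm⟩ := hσ (s 3) p
        exact key m (s 3) 1 hm h23 rfl
      · have h4 : s 4 = s 3 := by
          have := hrec 1
          norm_num at this
          rw [this, hf4 (s 1) (s 2) (s 3) h23 h12]
        obtain ⟨m, hm⟩ := hσ (s 3) p
        exact key m (s 3) 2 hm rfl h4
    · have h3 : s 3 = s 2 := by
        rw [h3eq, hf4 (s 0) (s 1) (s 2) h12 h01]
      obtain ⟨m, hm⟩ := hσ (s 2) p
      exact key m (s 2) 1 hm rfl h3
end

section
/- Let k_1,...,k_n ≥ 4, A = {1,...,k_1} × ... × {1,...,k_n}, and let σ be the cyclic lexicographic successor on A. Define a deterministic 2-recall strategy vector f for a game U: on state (a,b), if a ≠ b and (a_j − b_j) mod k_j ∈ {0,1} for all j ('move-on'), each player i plays σ_i(a); else if (b_j − a_j) mod k_j ∈ {0,1,2} for all j ('query'), each player i plays b_i if b_i ∈ BR_i(b) and b_i − 1 mod k_i otherwise; else ('repeat') each player i plays b_i. If U has at least one pure Nash equilibrium, then from every initial state in A², the run of f converges to a state (p,p) with p a pure Nash equilibrium of U. -/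
/-!
Within two steps the run reaches a query state `(a, b)`. Because every `kᵢ ≥ 4`, a query state
is never a move-on state. If `b` is a Nash equilibrium, everybody repeats `b` forever. Otherwise
some player steps down, which makes `(b, f a b)` a move-on state; next everybody plays
`lexSucc b`, and `(f a b, lexSucc b)` is again a query state. So the second components of the
successive query states run through the orbit of `lexSucc`, which is all of `∏ i, Fin (k i)`
because `lexSucc` adds one to a mixed-radix encoding of the profiles; hence they reach a Nash
equilibrium.
-/

/-- The lexicographic successor map on `∏ i, Fin (k i)` (actions `1,…,kᵢ`
encoded as `0,…,kᵢ-1`). -/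
def lexSucc {n : ℕ} (k : Fin n → ℕ) (hk : ∀ i, 0 < k i)
    (a : (i : Fin n) → Fin (k i)) : (i : Fin n) → Fin (k i) :=
  fun i =>
    if ∀ j, i < j → ((a j : ℕ) = k j - 1) then
      ⟨((a i : ℕ) + 1) % k i, Nat.mod_lt _ (hk i)⟩
    else a i

open Finset

theorem Finset.sum_pred_mul_prod_gt_add_one {ι : Type*} [LinearOrder ι] (k : ι → ℕ)
    (s : Finset ι) (hk : ∀ i ∈ s, 0 < k i) :
    ∑ i ∈ s, (k i - 1) * ∏ j ∈ s with i < j, k j + 1 = ∏ i ∈ s, k i := by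
  induction s using Finset.induction_on_min with
  | empty => simp
  | insert a s ha ih =>
    have has : a ∉ s := fun h => lt_irrefl a (ha a h)
    have hfa : ∏ j ∈ insert a s with a < j, k j = ∏ j ∈ s, k j := by
      rw [filter_insert, if_neg (lt_irrefl a), filter_true_of_mem ha]
    have hfi : ∀ i ∈ s, ∏ j ∈ insert a s with i < j, k j = ∏ j ∈ s with i < j, k j := by
      intro i hi
      rw [filter_insert, if_neg (ha i hi).not_gt]
    rw [sum_insert has, sum_congr rfl fun i hi => by rw [hfi i hi], hfa, prod_insert has,
      add_assoc, ih fun i hi => hk i (mem_insert_of_mem hi)]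
    have hka : k a = k a - 1 + 1 := (Nat.sub_add_cancel (hk a (mem_insert_self a s))).symm
    rw [hka, Nat.add_sub_cancel]
    ring

theorem Nat.add_sub_mod_eq_ite {K x y : ℕ} (hx : x < K) (hy : y < K) :
    (x + K - y) % K = if y ≤ x then x - y else x + K - y := by
  split_ifs with h
  · rw [show x + K - y = x - y + K by omega, Nat.add_mod_right, Nat.mod_eq_of_lt (by omega)]
  · exact Nat.mod_eq_of_lt (by omega)

theorem Nat.add_one_mod_eq_ite {K x : ℕ} (hx : x < K) :
    (x + 1) % K = if x + 1 < K then x + 1 else 0 := by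
  split_ifs with h
  · exact Nat.mod_eq_of_lt h
  · rw [show x + 1 = K by omega, Nat.mod_self]

section LexSucc

variable {n : ℕ} {k : Fin n → ℕ}

theorem lexSucc_apply_of_forall (hk : ∀ i, 0 < k i) {a : ∀ i, Fin (k i)} {i : Fin n}
    (h : ∀ j, i < j → (a j : ℕ) = k j - 1) : (lexSucc k hk a i : ℕ) = ((a i : ℕ) + 1) % k i := by
  simp only [lexSucc, if_pos h]

theorem lexSucc_apply_of_not_forall (hk : ∀ i, 0 < k i) {a : ∀ i, Fin (k i)} {i : Fin n}
    (h : ¬ ∀ j, i < j → (a j : ℕ) = k j - 1) : lexSucc k hk a i = a i :=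
  if_neg h

theorem lexSucc_apply_eq_or (hk : ∀ i, 0 < k i) (a : ∀ i, Fin (k i)) (i : Fin n) :
    (lexSucc k hk a i : ℕ) = a i ∨ (lexSucc k hk a i : ℕ) = ((a i : ℕ) + 1) % k i := by
  by_cases h : ∀ j, i < j → (a j : ℕ) = k j - 1
  · exact Or.inr (lexSucc_apply_of_forall hk h)
  · exact Or.inl (congrArg Fin.val (lexSucc_apply_of_not_forall hk h))

theorem lexSucc_eq_zero_of_forall_eq (hk : ∀ i, 0 < k i) {a : ∀ i, Fin (k i)}
    (ha : ∀ i, (a i : ℕ) = k i - 1) (i : Fin n) : (lexSucc k hk a i : ℕ) = 0 := by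
  rw [lexSucc_apply_of_forall hk fun j _ => ha j, ha i, Nat.sub_add_cancel (hk i), Nat.mod_self]

/-- Adding one at the last coordinate `i₀` that is not maximal: the coordinates above it wrap
around from `k j - 1` to `0`. -/
theorem lexSucc_add_carry (hk : ∀ i, 0 < k i) {a : ∀ i, Fin (k i)} {i₀ : Fin n}
    (hi₀ : (a i₀ : ℕ) + 1 < k i₀) (hmax : ∀ j, i₀ < j → (a j : ℕ) = k j - 1) (j : Fin n) :
    (lexSucc k hk a j : ℕ) + (if i₀ < j then k j - 1 else 0) =
      a j + (if j = i₀ then 1 else 0) := by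
  rcases lt_trichotomy j i₀ with hj | rfl | hj
  · have hne : ¬ ∀ l, j < l → (a l : ℕ) = k l - 1 := fun h => by have := h i₀ hj; omega
    simp [lexSucc_apply_of_not_forall hk hne, hj.not_gt, hj.ne]
  · simp [lexSucc_apply_of_forall hk hmax, Nat.mod_eq_of_lt hi₀]
  · have hwrap : (a j : ℕ) + 1 = k j := by have := hk j; have := hmax j hj; omega
    rw [lexSucc_apply_of_forall hk fun l hl => hmax l (hj.trans hl), hwrap, Nat.mod_self]
    simp [hj, hj.ne', hmax j hj]

end LexSucc

section Encoding

variable {n : ℕ} (k : Fin n → ℕ)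

def placeValue (i : Fin n) : ℕ := ∏ j ∈ Ioi i, k j

/-- Mixed-radix encoding with the last coordinate least significant, so that `lexSucc` adds one. -/
def encode (a : ∀ i, Fin (k i)) : ℕ := ∑ i, (a i : ℕ) * placeValue k i

variable {k}

theorem sum_pred_mul_placeValue_Ioi_add_one (hk : ∀ i, 0 < k i) (i : Fin n) :
    ∑ j ∈ Ioi i, (k j - 1) * placeValue k j + 1 = placeValue k i := by
  have hIoi : ∀ j ∈ Ioi i, {l ∈ Ioi i | j < l} = Ioi j := fun j hj => by
    ext l
    simp only [mem_filter, mem_Ioi] at hj ⊢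
    exact ⟨And.right, fun hl => ⟨hj.trans hl, hl⟩⟩
  rw [placeValue, ← sum_pred_mul_prod_gt_add_one k _ fun j _ => hk j]
  exact congrArg (· + 1) (sum_congr rfl fun j hj => by rw [placeValue, hIoi j hj])

theorem sum_pred_mul_placeValue_add_one (hk : ∀ i, 0 < k i) :
    ∑ j, (k j - 1) * placeValue k j + 1 = ∏ j, k j := by
  rw [← sum_pred_mul_prod_gt_add_one k _ fun j _ => hk j]
  simp only [placeValue, filter_lt_eq_Ioi]

theorem encode_lt (hk : ∀ i, 0 < k i) (a : ∀ i, Fin (k i)) : encode k a < ∏ j, k j := by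
  have hle : encode k a ≤ ∑ j, (k j - 1) * placeValue k j :=
    sum_le_sum fun j _ => Nat.mul_le_mul_right _ (Nat.le_sub_one_of_lt (a j).isLt)
  have := sum_pred_mul_placeValue_add_one hk
  omega

theorem encode_lexSucc (hk : ∀ i, 0 < k i) (a : ∀ i, Fin (k i)) :
    encode k (lexSucc k hk a) = (encode k a + 1) % ∏ j, k j := by
  by_cases hne : ∃ i, (a i : ℕ) + 1 < k i
  · obtain ⟨i₀, hi₀, hle⟩ :=
      (univ.filter fun i => (a i : ℕ) + 1 < k i).exists_max_image id
        (by simpa [Finset.Nonempty] using hne)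
    simp only [mem_filter, mem_univ, true_and, id] at hi₀ hle
    have hmax : ∀ j, i₀ < j → (a j : ℕ) = k j - 1 := fun j hj => by
      have := (a j).isLt
      have := mt (hle j) hj.not_ge
      omega
    have hsum := sum_congr rfl fun j (_ : j ∈ univ) =>
      congrArg (· * placeValue k j) (lexSucc_add_carry hk hi₀ hmax j)
    simp only [add_mul, sum_add_distrib, ite_mul, zero_mul, one_mul, sum_ite_eq', mem_univ,
      if_true, ← sum_filter, filter_lt_eq_Ioi] at hsum
    have htel := sum_pred_mul_placeValue_Ioi_add_one hk i₀
    have hsucc : encode k (lexSucc k hk a) = encode k a + 1 := by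
      unfold encode
      omega
    rw [← hsucc, Nat.mod_eq_of_lt (encode_lt hk _)]
  · push Not at hne
    have ha : ∀ i, (a i : ℕ) = k i - 1 := fun i => by have := (a i).isLt; have := hne i; omega
    have hzero : encode k (lexSucc k hk a) = 0 :=
      sum_eq_zero fun j _ => by rw [lexSucc_eq_zero_of_forall_eq hk ha j, zero_mul]
    have hfull : encode k a + 1 = ∏ j, k j := by
      rw [← sum_pred_mul_placeValue_add_one hk, encode]
      simp only [ha]
    rw [hzero, hfull, Nat.mod_self]

theorem encode_iterate_lexSucc (hk : ∀ i, 0 < k i) (b : ∀ i, Fin (k i)) (m : ℕ) :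
    encode k ((lexSucc k hk)^[m] b) = (encode k b + m) % ∏ j, k j := by
  induction m with
  | zero => exact (Nat.mod_eq_of_lt (encode_lt hk b)).symm
  | succ m ih =>
    rw [Function.iterate_succ_apply', encode_lexSucc, ih, Nat.mod_add_mod, add_assoc]

theorem exists_iterate_lexSucc_eq (hk : ∀ i, 0 < k i) (b p : ∀ i, Fin (k i)) :
    ∃ m, (lexSucc k hk)^[m] b = p := by
  have hinj : Function.Injective fun m : Fin (∏ j, k j) => (lexSucc k hk)^[m] b := by
    intro m₁ m₂ h
    have h' := congrArg (encode k) h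
    simp only [encode_iterate_lexSucc] at h'
    exact Fin.ext ((Nat.ModEq.add_left_cancel' _ h').eq_of_lt_of_lt m₁.isLt m₂.isLt)
  obtain ⟨m, hm⟩ := hinj.surjective_of_finite finPiFinEquiv.symm p
  exact ⟨m, hm⟩

end Encoding

section Game

variable {ι : Type*} [DecidableEq ι] {A : ι → Type*}

def IsBestReply (u : ι → (∀ i, A i) → ℝ) (b : ∀ i, A i) (i : ι) : Prop :=
  ∀ y : A i, u i (Function.update b i y) ≤ u i b

def IsPureNash (u : ι → (∀ i, A i) → ℝ) (p : ∀ i, A i) : Prop :=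
  ∀ i, IsBestReply u p i

end Game

section Dynamics

variable {n : ℕ} (k : Fin n → ℕ)

-- `(x + k - y) % k` is `x - y` modulo `k`, written without truncated subtraction.
def IsMoveOn (a b : ∀ i, Fin (k i)) : Prop :=
  a ≠ b ∧ ∀ j, ((a j : ℕ) + k j - (b j : ℕ)) % k j = 0 ∨
    ((a j : ℕ) + k j - (b j : ℕ)) % k j = 1

def IsQuery (a b : ∀ i, Fin (k i)) : Prop :=
  ∀ j, ((b j : ℕ) + k j - (a j : ℕ)) % k j = 0 ∨ ((b j : ℕ) + k j - (a j : ℕ)) % k j = 1 ∨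
    ((b j : ℕ) + k j - (a j : ℕ)) % k j = 2

structure IsQueryStrategy (hk : ∀ i, 0 < k i) (u : Fin n → (∀ i, Fin (k i)) → ℝ)
    (f : (∀ i, Fin (k i)) → (∀ i, Fin (k i)) → ∀ i, Fin (k i)) : Prop where
  of_isMoveOn : ∀ a b, IsMoveOn k a b → f a b = lexSucc k hk a
  of_isQuery : ∀ a b, ¬ IsMoveOn k a b → IsQuery k a b →
    ∀ i, (IsBestReply u b i → f a b i = b i) ∧
      (¬ IsBestReply u b i → (f a b i : ℕ) = ((b i : ℕ) + k i - 1) % k i)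
  of_not_isQuery : ∀ a b, ¬ IsMoveOn k a b → ¬ IsQuery k a b → f a b = b

variable {k}

theorem isQuery_self (b : ∀ i, Fin (k i)) : IsQuery k b b :=
  fun j => Or.inl (by rw [Nat.add_sub_cancel_left, Nat.mod_self])

/-- Since `kⱼ ≥ 4`, the differences `aⱼ - bⱼ ∈ {0, 1}` and `bⱼ - aⱼ ∈ {0, 1, 2}`, which add up to
`0` modulo `kⱼ`, must both vanish. -/
theorem not_isMoveOn_of_isQuery (hk4 : ∀ i, 4 ≤ k i) {a b : ∀ i, Fin (k i)}
    (h : IsQuery k a b) : ¬ IsMoveOn k a b := by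
  rintro ⟨hne, hmo⟩
  refine hne (funext fun j => Fin.ext ?_)
  have hab := hmo j
  have hba := h j
  rw [Nat.add_sub_mod_eq_ite (a j).isLt (b j).isLt] at hab
  rw [Nat.add_sub_mod_eq_ite (b j).isLt (a j).isLt] at hba
  have := hk4 j
  split_ifs at hab hba <;> omega

theorem isQuery_lexSucc (hk3 : ∀ i, 3 ≤ k i) (hk : ∀ i, 0 < k i) {a b : ∀ i, Fin (k i)}
    (h : IsMoveOn k a b) : IsQuery k b (lexSucc k hk a) := by
  intro j
  have hab := h.2 j
  have := hk3 j
  rw [Nat.add_sub_mod_eq_ite (a j).isLt (b j).isLt] at hab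
  rw [Nat.add_sub_mod_eq_ite (lexSucc k hk a j).isLt (b j).isLt]
  rcases lexSucc_apply_eq_or hk a j with hs | hs
  · rw [hs]
    split_ifs at hab ⊢ <;> omega
  · rw [Nat.add_one_mod_eq_ite (a j).isLt] at hs
    split_ifs at hs <;> rw [hs] <;> split_ifs at hab ⊢ <;> omega

namespace IsQueryStrategy

variable {hk : ∀ i, 0 < k i} {u : Fin n → (∀ i, Fin (k i)) → ℝ}
  {f : (∀ i, Fin (k i)) → (∀ i, Fin (k i)) → ∀ i, Fin (k i)}

theorem apply_eq_of_isPureNash (hf : IsQueryStrategy k hk u f) (hk4 : ∀ i, 4 ≤ k i)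
    {a b : ∀ i, Fin (k i)} (hq : IsQuery k a b) (hb : IsPureNash u b) : f a b = b :=
  funext fun i => (hf.of_isQuery a b (not_isMoveOn_of_isQuery hk4 hq) hq i).1 (hb i)

theorem isMoveOn_apply (hf : IsQueryStrategy k hk u f) (hk4 : ∀ i, 4 ≤ k i)
    {a b : ∀ i, Fin (k i)} (hq : IsQuery k a b) (hb : ¬ IsPureNash u b) :
    IsMoveOn k b (f a b) := by
  have hquery := hf.of_isQuery a b (not_isMoveOn_of_isQuery hk4 hq) hq
  refine ⟨fun heq => ?_, fun j => ?_⟩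
  · obtain ⟨i, hi⟩ := not_forall.mp hb
    have hfi := (hquery i).2 hi
    rw [← heq, Nat.add_sub_mod_eq_ite (b i).isLt (by have := hk4 i; omega)] at hfi
    have := hk4 i
    split_ifs at hfi <;> omega
  · by_cases hj : IsBestReply u b j
    · rw [(hquery j).1 hj, Nat.add_sub_cancel_left, Nat.mod_self]
      exact Or.inl rfl
    · have hfj := (hquery j).2 hj
      have := hk4 j
      rw [Nat.add_sub_mod_eq_ite (b j).isLt (by omega)] at hfj
      rw [Nat.add_sub_mod_eq_ite (b j).isLt (f a b j).isLt, hfj]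
      split_ifs <;> omega

variable {s : ℕ → ∀ i, Fin (k i)}

theorem exists_isQuery_run (hf : IsQueryStrategy k hk u f) (hk4 : ∀ i, 4 ≤ k i)
    (hrec : ∀ t, s (t + 2) = f (s t) (s (t + 1))) : ∃ t, IsQuery k (s t) (s (t + 1)) := by
  by_cases hmo : IsMoveOn k (s 0) (s 1)
  · refine ⟨1, ?_⟩
    rw [hrec 0, hf.of_isMoveOn _ _ hmo]
    exact isQuery_lexSucc (fun i => (Nat.le_succ 3).trans (hk4 i)) hk hmo
  · by_cases hq : IsQuery k (s 0) (s 1)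
    · exact ⟨0, hq⟩
    · refine ⟨1, ?_⟩
      rw [hrec 0, hf.of_not_isQuery _ _ hmo hq]
      exact isQuery_self _

theorem run_eq_of_isPureNash (hf : IsQueryStrategy k hk u f) (hk4 : ∀ i, 4 ≤ k i)
    (hrec : ∀ t, s (t + 2) = f (s t) (s (t + 1))) {t : ℕ} (hq : IsQuery k (s t) (s (t + 1)))
    (hp : IsPureNash u (s (t + 1))) {t' : ℕ} (ht' : t + 1 ≤ t') : s t' = s (t + 1) := by
  suffices h : s t' = s (t + 1) ∧ s (t' + 1) = s (t + 1) from h.1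
  induction t', ht' using Nat.le_induction with
  | base => exact ⟨rfl, by rw [hrec t, hf.apply_eq_of_isPureNash hk4 hq hp]⟩
  | succ t' _ ih =>
    refine ⟨ih.2, ?_⟩
    rw [hrec t', ih.1, ih.2, hf.apply_eq_of_isPureNash hk4 (isQuery_self _) hp]

-- The state `(s (t + 1), s (t + 2))` in between is a move-on state.
theorem run_isQuery_add_two (hf : IsQueryStrategy k hk u f) (hk4 : ∀ i, 4 ≤ k i)
    (hrec : ∀ t, s (t + 2) = f (s t) (s (t + 1))) {t : ℕ} (hq : IsQuery k (s t) (s (t + 1)))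
    (hp : ¬ IsPureNash u (s (t + 1))) :
    s (t + 2 + 1) = lexSucc k hk (s (t + 1)) ∧ IsQuery k (s (t + 2)) (s (t + 2 + 1)) := by
  have hmo : IsMoveOn k (s (t + 1)) (s (t + 2)) := by
    rw [hrec t]
    exact hf.isMoveOn_apply hk4 hq hp
  have hnext : s (t + 2 + 1) = lexSucc k hk (s (t + 1)) := by
    rw [hrec (t + 1), hf.of_isMoveOn _ _ hmo]
  exact ⟨hnext, hnext ▸ isQuery_lexSucc (fun i => (Nat.le_succ 3).trans (hk4 i)) hk hmo⟩

theorem run_converges (hf : IsQueryStrategy k hk u f) (hk4 : ∀ i, 4 ≤ k i)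
    (hrec : ∀ t, s (t + 2) = f (s t) (s (t + 1))) (m : ℕ) {t : ℕ}
    (hq : IsQuery k (s t) (s (t + 1))) (hp : IsPureNash u ((lexSucc k hk)^[m] (s (t + 1)))) :
    ∃ p, IsPureNash u p ∧ ∃ T, ∀ t', T ≤ t' → s t' = p := by
  induction m generalizing t with
  | zero => exact ⟨s (t + 1), hp, t + 1, fun t' => hf.run_eq_of_isPureNash hk4 hrec hq hp⟩
  | succ m ih =>
    by_cases hb : IsPureNash u (s (t + 1))
    · exact ⟨s (t + 1), hb, t + 1, fun t' => hf.run_eq_of_isPureNash hk4 hrec hq hb⟩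
    · obtain ⟨hnext, hq'⟩ := hf.run_isQuery_add_two hk4 hrec hq hb
      rw [Function.iterate_succ_apply] at hp
      exact ih hq' (hnext ▸ hp)

end IsQueryStrategy

end Dynamics

theorem stmt18_general {n : ℕ} (k : Fin n → ℕ) (hk4 : ∀ i, 4 ≤ k i)
    (hk : ∀ i, 0 < k i)
    (u : Fin n → ((i : Fin n) → Fin (k i)) → ℝ)
    (f : ((i : Fin n) → Fin (k i)) → ((i : Fin n) → Fin (k i)) →
      ((i : Fin n) → Fin (k i)))
    (hfm : ∀ a b, a ≠ b →
      (∀ j, ((a j : ℕ) + k j - (b j : ℕ)) % k j = 0 ∨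
            ((a j : ℕ) + k j - (b j : ℕ)) % k j = 1) →
      f a b = lexSucc k hk a)
    (hfq : ∀ a b,
      ¬ (a ≠ b ∧ ∀ j, ((a j : ℕ) + k j - (b j : ℕ)) % k j = 0 ∨
                      ((a j : ℕ) + k j - (b j : ℕ)) % k j = 1) →
      (∀ j, ((b j : ℕ) + k j - (a j : ℕ)) % k j = 0 ∨
            ((b j : ℕ) + k j - (a j : ℕ)) % k j = 1 ∨
            ((b j : ℕ) + k j - (a j : ℕ)) % k j = 2) →
      ∀ i, ((∀ y : Fin (k i), u i (Function.update b i y) ≤ u i b) →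
              f a b i = b i) ∧
           (¬ (∀ y : Fin (k i), u i (Function.update b i y) ≤ u i b) →
              (f a b i : ℕ) = ((b i : ℕ) + k i - 1) % k i))
    (hfr : ∀ a b,
      ¬ (a ≠ b ∧ ∀ j, ((a j : ℕ) + k j - (b j : ℕ)) % k j = 0 ∨
                      ((a j : ℕ) + k j - (b j : ℕ)) % k j = 1) →
      ¬ (∀ j, ((b j : ℕ) + k j - (a j : ℕ)) % k j = 0 ∨
              ((b j : ℕ) + k j - (a j : ℕ)) % k j = 1 ∨
              ((b j : ℕ) + k j - (a j : ℕ)) % k j = 2) →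
      f a b = b)
    (hPNE : ∃ p : (i : Fin n) → Fin (k i),
      ∀ i, ∀ y : Fin (k i), u i (Function.update p i y) ≤ u i p)
    (s : ℕ → ((i : Fin n) → Fin (k i)))
    (hrec : ∀ t, s (t + 2) = f (s t) (s (t + 1))) :
    ∃ p : (i : Fin n) → Fin (k i),
      (∀ i, ∀ y : Fin (k i), u i (Function.update p i y) ≤ u i p) ∧
      ∃ T : ℕ, ∀ t, T ≤ t → s t = p := by
  have hf : IsQueryStrategy k hk u f := ⟨fun a b h => hfm a b h.1 h.2, hfq, hfr⟩
  obtain ⟨t, hq⟩ := hf.exists_isQuery_run hk4 hrec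
  obtain ⟨p, hp⟩ := hPNE
  obtain ⟨m, hm⟩ := exists_iterate_lexSucc_eq hk (s (t + 1)) p
  exact hf.run_converges hk4 hrec m hq (hm ▸ hp)

/-- The deterministic 2-recall dynamics of Theorem 17 (each `k i ≥ 4`): on
state `(a,b)`, in 'move-on' states (`a ≠ b` and `(aⱼ-bⱼ) mod kⱼ ∈ {0,1}` for
all `j`) play `σ(a)`; in 'query' states (`(bⱼ-aⱼ) mod kⱼ ∈ {0,1,2}` for all
`j`) each player repeats `bᵢ` if it is a best reply to `b` and plays
`bᵢ - 1 (mod kᵢ)` otherwise; in all other ('repeat') states play `b`.  If the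
game has a pure Nash equilibrium, every run converges to a repeated PNE. -/
theorem stmt18 {n : ℕ} (hn : 2 ≤ n) (k : Fin n → ℕ) (hk4 : ∀ i, 4 ≤ k i)
    (hk : ∀ i, 0 < k i)
    (u : Fin n → ((i : Fin n) → Fin (k i)) → ℝ)
    (f : ((i : Fin n) → Fin (k i)) → ((i : Fin n) → Fin (k i)) →
      ((i : Fin n) → Fin (k i)))
    (hfm : ∀ a b, a ≠ b →
      (∀ j, ((a j : ℕ) + k j - (b j : ℕ)) % k j = 0 ∨
            ((a j : ℕ) + k j - (b j : ℕ)) % k j = 1) →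
      f a b = lexSucc k hk a)
    (hfq : ∀ a b,
      ¬ (a ≠ b ∧ ∀ j, ((a j : ℕ) + k j - (b j : ℕ)) % k j = 0 ∨
                      ((a j : ℕ) + k j - (b j : ℕ)) % k j = 1) →
      (∀ j, ((b j : ℕ) + k j - (a j : ℕ)) % k j = 0 ∨
            ((b j : ℕ) + k j - (a j : ℕ)) % k j = 1 ∨
            ((b j : ℕ) + k j - (a j : ℕ)) % k j = 2) →
      ∀ i, ((∀ y : Fin (k i), u i (Function.update b i y) ≤ u i b) →
              f a b i = b i) ∧
           (¬ (∀ y : Fin (k i), u i (Function.update b i y) ≤ u i b) →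
              (f a b i : ℕ) = ((b i : ℕ) + k i - 1) % k i))
    (hfr : ∀ a b,
      ¬ (a ≠ b ∧ ∀ j, ((a j : ℕ) + k j - (b j : ℕ)) % k j = 0 ∨
                      ((a j : ℕ) + k j - (b j : ℕ)) % k j = 1) →
      ¬ (∀ j, ((b j : ℕ) + k j - (a j : ℕ)) % k j = 0 ∨
              ((b j : ℕ) + k j - (a j : ℕ)) % k j = 1 ∨
              ((b j : ℕ) + k j - (a j : ℕ)) % k j = 2) →
      f a b = b)
    (hPNE : ∃ p : (i : Fin n) → Fin (k i),
      ∀ i, ∀ y : Fin (k i), u i (Function.update p i y) ≤ u i p)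
    (s : ℕ → ((i : Fin n) → Fin (k i)))
    (hrec : ∀ t, s (t + 2) = f (s t) (s (t + 1))) :
    ∃ p : (i : Fin n) → Fin (k i),
      (∀ i, ∀ y : Fin (k i), u i (Function.update p i y) ≤ u i p) ∧
      ∃ T : ℕ, ∀ t, T ≤ t → s t = p :=
  stmt18_general k hk4 hk u f hfm hfq hfr hPNE s hrec
end
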